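/- Let S and T be commuting bounded linear operators on a complex Banach space X such that σ(S+T) ⊂ ℝ and σ(S−T) ⊂ iℝ. Then σ((S+T)/2) = {Re λ : λ ∈ σ(S)} and σ((S−T)/(2i)) = {Im λ : λ ∈ σ(S)}. -/

import Mathlib

/-!
Pass to the bicommutant of `{S, T}`: a closed commutative subalgebra of `L(X)` which contains
its inverses, so spectra computed there agree with spectra in `L(X)`. By Gelfand theory the
spectrum of an element of a commutative Banach algebra is the set of its values under the
characters. Writing `S = A + i B` with `A = (S + T)/2` and `B = (S - T)/(2i)`, both `A` and `B`
have real spectrum, so every character `φ` takes real values on them and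
`φ A = Re (φ S)`, `φ B = Im (φ S)`.
-/

open Complex WeakDual

namespace Subalgebra

variable {R A : Type*} [CommRing R] [Ring A] [Algebra R A]

theorem isUnit_centralizer_iff {s : Set A} {x : centralizer R s} : IsUnit x ↔ IsUnit (x : A) := by
  refine ⟨fun hx => hx.map (centralizer R s).val, fun ⟨u, hu⟩ => ?_⟩
  have hinv : (↑u⁻¹ : A) ∈ centralizer R s := fun g hg =>
    (Commute.units_inv_right (a := g) (u := u) (hu ▸ x.2 g hg)).eq
  exact ⟨⟨x, ⟨_, hinv⟩, Subtype.ext <| by simp [← hu], Subtype.ext <| by simp [← hu]⟩, rfl⟩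

theorem spectrum_centralizer (s : Set A) (x : centralizer R s) :
    spectrum R x = spectrum R (x : A) := by
  ext r
  simp only [spectrum.mem_iff, isUnit_centralizer_iff]
  rfl

end Subalgebra

theorem spectrum.mem_inv_smul_iff {𝕜 A : Type*} [Field 𝕜] [Ring A] [Algebra 𝕜 A] {c : 𝕜}
    (hc : c ≠ 0) {a : A} {z : 𝕜} : z ∈ spectrum 𝕜 (c⁻¹ • a) ↔ c * z ∈ spectrum 𝕜 a := by
  simpa [Units.smul_def, hc] using
    spectrum.smul_mem_smul_iff (a := a) (s := c * z) (r := Units.mk0 c⁻¹ (inv_ne_zero hc))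

section Commutative

variable {A : Type*} [NormedCommRing A] [NormedAlgebra ℂ A] [CompleteSpace A]

theorem spectrum_eq_range_characterSpace (a : A) :
    spectrum ℂ a = Set.range fun φ : characterSpace ℂ A => φ a :=
  Set.ext fun _ => CharacterSpace.mem_spectrum_iff_exists

theorem CharacterSpace.im_apply_eq_zero {a : A} (ha : ∀ z ∈ spectrum ℂ a, z.im = 0)
    (φ : characterSpace ℂ A) : (φ a).im = 0 :=
  ha _ <| CharacterSpace.mem_spectrum_iff_exists.2 ⟨φ, rfl⟩

theorem CharacterSpace.ofReal_re_apply {a : A} (ha : ∀ z ∈ spectrum ℂ a, z.im = 0)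
    (φ : characterSpace ℂ A) : ((φ a).re : ℂ) = φ a :=
  Complex.ext (by simp) (by simp [im_apply_eq_zero ha])

theorem spectrum_eq_re_im_image_of_commRing {a b : A}
    (ha : ∀ z ∈ spectrum ℂ a, z.im = 0) (hb : ∀ z ∈ spectrum ℂ b, z.im = 0) :
    spectrum ℂ a = (fun z : ℂ => (z.re : ℂ)) '' spectrum ℂ (a + I • b) ∧
      spectrum ℂ b = (fun z : ℂ => (z.im : ℂ)) '' spectrum ℂ (a + I • b) := by
  have hre (φ : characterSpace ℂ A) : ((φ (a + I • b)).re : ℂ) = φ a := by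
    simp [CharacterSpace.im_apply_eq_zero hb, CharacterSpace.ofReal_re_apply ha]
  have him (φ : characterSpace ℂ A) : ((φ (a + I • b)).im : ℂ) = φ b := by
    simp [CharacterSpace.im_apply_eq_zero ha, CharacterSpace.ofReal_re_apply hb]
  simp only [spectrum_eq_range_characterSpace, ← Set.range_comp, Function.comp_def, hre, him,
    and_self]

end Commutative

section Banach

variable {A : Type*} [NormedRing A] [NormedAlgebra ℂ A] [CompleteSpace A]

theorem spectrum_eq_re_im_image_of_commute {a b : A} (hab : Commute a b)
    (ha : ∀ z ∈ spectrum ℂ a, z.im = 0) (hb : ∀ z ∈ spectrum ℂ b, z.im = 0) :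
    spectrum ℂ a = (fun z : ℂ => (z.re : ℂ)) '' spectrum ℂ (a + I • b) ∧
      spectrum ℂ b = (fun z : ℂ => (z.im : ℂ)) '' spectrum ℂ (a + I • b) := by
  let C := Subalgebra.centralizer ℂ (Set.centralizer ({a, b} : Set A))
  have hcomm : ∀ x ∈ ({a, b} : Set A), ∀ y ∈ ({a, b} : Set A), x * y = y * x := by
    rintro x (rfl | rfl) y (rfl | rfl)
    exacts [rfl, hab.eq, hab.symm.eq, rfl]
  let : NormedCommRing C :=
    { SubringClass.toNormedRing C with
      mul_comm := fun x y => Subtype.ext <|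
        Set.centralizer_centralizer_comm_of_comm hcomm _ x.2 _ y.2 }
  have : CompleteSpace C := (Set.isClosed_centralizer _).completeSpace_coe
  have hmem : ∀ x ∈ ({a, b} : Set A), x ∈ C := fun _ hx => Set.subset_centralizer_centralizer hx
  let a' : C := ⟨a, hmem a (by simp)⟩
  let b' : C := ⟨b, hmem b (by simp)⟩
  have hσ (x : C) : spectrum ℂ (x : A) = spectrum ℂ x := (Subalgebra.spectrum_centralizer _ x).symm
  have ha' : ∀ z ∈ spectrum ℂ a', z.im = 0 := by rw [← hσ]; exact ha
  have hb' : ∀ z ∈ spectrum ℂ b', z.im = 0 := by rw [← hσ]; exact hb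
  have := spectrum_eq_re_im_image_of_commRing ha' hb'
  rwa [← hσ, ← hσ, ← hσ] at this

end Banach

/-- For commuting bounded operators `S`, `T` on a complex Banach space with
`σ(S+T) ⊂ ℝ` and `σ(S−T) ⊂ iℝ`, one has `σ((S+T)/2) = {Re λ : λ ∈ σ(S)}` and
`σ((S−T)/(2i)) = {Im λ : λ ∈ σ(S)}`. -/
theorem stmt2 {X : Type*} [NormedAddCommGroup X] [NormedSpace ℂ X] [CompleteSpace X]
    (S T : X →L[ℂ] X) (hST : S * T = T * S)
    (hreal : ∀ z ∈ spectrum ℂ (S + T), z.im = 0)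
    (himag : ∀ z ∈ spectrum ℂ (S - T), z.re = 0) :
    spectrum ℂ ((2 : ℂ)⁻¹ • (S + T)) = (fun z : ℂ => (z.re : ℂ)) '' spectrum ℂ S ∧
    spectrum ℂ (((2 : ℂ) * Complex.I)⁻¹ • (S - T)) =
      (fun z : ℂ => (z.im : ℂ)) '' spectrum ℂ S := by
  have h2I : (2 : ℂ) * I ≠ 0 := by simp
  have hST' : Commute S T := hST
  have hcomm : Commute ((2 : ℂ)⁻¹ • (S + T)) (((2 : ℂ) * I)⁻¹ • (S - T)) :=
    (((Commute.refl S).sub_right hST').add_left (hST'.symm.sub_right (Commute.refl T))).smul_left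
      _ |>.smul_right _
  have hA : ∀ z ∈ spectrum ℂ ((2 : ℂ)⁻¹ • (S + T)), z.im = 0 := fun z hz => by
    simpa using hreal _ ((spectrum.mem_inv_smul_iff two_ne_zero).1 hz)
  have hB : ∀ z ∈ spectrum ℂ (((2 : ℂ) * I)⁻¹ • (S - T)), z.im = 0 := fun z hz => by
    simpa using himag _ ((spectrum.mem_inv_smul_iff h2I).1 hz)
  have hS : (2 : ℂ)⁻¹ • (S + T) + I • (((2 : ℂ) * I)⁻¹ • (S - T)) = S := by
    match_scalars <;> field_simp <;> ring
  simpa only [hS] using spectrum_eq_re_im_image_of_commute hcomm hA hB
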